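/- arXiv:2605.23606 — 3 statements merged into one kernel-verified Lean document; each statement's English description precedes it below -/
import Mathlib

section
/- Let E_1, …, E_m be Banach lattices and let F be a Banach space. The set of all sporadically M-weakly compact m-linear operators, that is, all continuous m-linear operators A : E_1 × ⋯ × E_m → F sending norm bounded sporadically disjoint sequences in E_1 × ⋯ × E_m to norm null sequences in F, is a closed linear subspace of L(E_1,…,E_m;F). -/
/-!
For a fixed bounded sequence `x`, the evaluations `A ↦ A (x n)` are continuous linear maps with
norms bounded uniformly in `n`, hence an equicontinuous family; so the operators sending `x` to a
null sequence form a closed subspace. The sporadically M-weakly compact operators are the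
intersection of these subspaces over all bounded sporadically disjoint sequences.
-/

open Filter Topology Bornology

/-- The set of sporadically M-weakly compact `m`-linear operators from Banach lattices
`E₁, …, E_m` to a Banach space `F`: operators sending norm bounded sporadically disjoint
sequences in `E₁ × ⋯ × E_m` to norm null sequences in `F`. Two elements of the product are
sporadically disjoint when they are disjoint in some coordinate. -/
def SporadicallyMWeaklyCompactMultilinear {m : ℕ} (E : Fin m → Type*) (F : Type*)
    [∀ i, NormedAddCommGroup (E i)] [∀ i, Lattice (E i)]
    [∀ i, HasSolidNorm (E i)] [∀ i, IsOrderedAddMonoid (E i)] [∀ i, NormedSpace ℝ (E i)]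
    [NormedAddCommGroup F] [NormedSpace ℝ F] :
    Set (ContinuousMultilinearMap ℝ E F) :=
  {A | ∀ x : ℕ → ∀ i, E i, IsBounded (Set.range x) →
    (∀ j k, j ≠ k → ∃ i, |x j i| ⊓ |x k i| = 0) →
    Tendsto (fun n => ‖A (x n)‖) atTop (nhds 0)}

namespace ContinuousMultilinearMap

variable {𝕜 ι α : Type*} [NontriviallyNormedField 𝕜] {E : ι → Type*} {F : Type*}
  [∀ i, SeminormedAddCommGroup (E i)] [∀ i, NormedSpace 𝕜 (E i)]
  [SeminormedAddCommGroup F] [NormedSpace 𝕜 F]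

variable (𝕜 E F) in
def nullAlong (l : Filter α) (x : α → ∀ i, E i) :
    Submodule 𝕜 (ContinuousMultilinearMap 𝕜 E F) where
  carrier := {A | Tendsto (fun a ↦ A (x a)) l (𝓝 0)}
  zero_mem' := tendsto_const_nhds
  add_mem' h₁ h₂ := by simpa using h₁.add h₂
  smul_mem' c _ h := by simpa using h.const_smul c

theorem mem_nullAlong {l : Filter α} {x : α → ∀ i, E i} {A : ContinuousMultilinearMap 𝕜 E F} :
    A ∈ nullAlong 𝕜 E F l x ↔ Tendsto (fun a ↦ ‖A (x a)‖) l (𝓝 0) :=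
  tendsto_zero_iff_norm_tendsto_zero

variable [Fintype ι]

theorem equicontinuous_apply_of_isBounded {x : α → ∀ i, E i} (hx : IsBounded (Set.range x)) :
    Equicontinuous fun a (A : ContinuousMultilinearMap 𝕜 E F) ↦ A (x a) := by
  obtain ⟨C, hC⟩ := isBounded_iff_forall_norm_le.mp hx
  have hbound : ∃ K, ∀ a (A : ContinuousMultilinearMap 𝕜 E F), ‖apply 𝕜 E F (x a) A‖ ≤ K * ‖A‖ :=
    ⟨C ^ Fintype.card ι, fun a A ↦ by
      rw [apply_apply, mul_comm]
      exact A.le_opNorm_mul_pow_card_of_le (hC _ (Set.mem_range_self a))⟩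
  exact (NormedSpace.equicontinuous_TFAE fun a ↦ apply 𝕜 E F (x a)).out 3 1 |>.mp hbound

theorem isClosed_nullAlong {l : Filter α} {x : α → ∀ i, E i} (hx : IsBounded (Set.range x)) :
    IsClosed (nullAlong 𝕜 E F l x : Set (ContinuousMultilinearMap 𝕜 E F)) :=
  (equicontinuous_apply_of_isBounded hx).isClosed_setOfPred_tendsto continuous_const

end ContinuousMultilinearMap

section Sporadic

open ContinuousMultilinearMap

variable {m : ℕ} (E : Fin m → Type*) (F : Type*)
  [∀ i, NormedAddCommGroup (E i)] [∀ i, Lattice (E i)] [∀ i, NormedSpace ℝ (E i)]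
  [NormedAddCommGroup F] [NormedSpace ℝ F]

noncomputable def sporadicallyMWeaklyCompactSubmodule :
    Submodule ℝ (ContinuousMultilinearMap ℝ E F) :=
  ⨅ (x : ℕ → ∀ i, E i) (_ : IsBounded (Set.range x))
    (_ : ∀ j k, j ≠ k → ∃ i, |x j i| ⊓ |x k i| = 0), nullAlong ℝ E F atTop x

theorem isClosed_sporadicallyMWeaklyCompactSubmodule :
    IsClosed (sporadicallyMWeaklyCompactSubmodule E F : Set (ContinuousMultilinearMap ℝ E F)) := by
  simp only [sporadicallyMWeaklyCompactSubmodule, Submodule.coe_iInf]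
  exact isClosed_iInter fun _ ↦ isClosed_iInter fun hx ↦ isClosed_iInter fun _ ↦
    isClosed_nullAlong hx

variable [∀ i, HasSolidNorm (E i)] [∀ i, IsOrderedAddMonoid (E i)]

theorem coe_sporadicallyMWeaklyCompactSubmodule :
    (sporadicallyMWeaklyCompactSubmodule E F : Set (ContinuousMultilinearMap ℝ E F)) =
      SporadicallyMWeaklyCompactMultilinear E F := by
  ext A
  simp only [sporadicallyMWeaklyCompactSubmodule, SporadicallyMWeaklyCompactMultilinear,
    SetLike.mem_coe, Submodule.mem_iInf, mem_nullAlong, Set.mem_ofPred_eq]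

end Sporadic

theorem stmt9_general {m : ℕ} (E : Fin m → Type*) (F : Type*)
    [∀ i, NormedAddCommGroup (E i)] [∀ i, Lattice (E i)]
    [∀ i, HasSolidNorm (E i)] [∀ i, IsOrderedAddMonoid (E i)] [∀ i, NormedSpace ℝ (E i)]
    [NormedAddCommGroup F] [NormedSpace ℝ F] :
    IsClosed (SporadicallyMWeaklyCompactMultilinear E F) ∧
      (0 : ContinuousMultilinearMap ℝ E F) ∈ SporadicallyMWeaklyCompactMultilinear E F ∧
      (∀ A₁ ∈ SporadicallyMWeaklyCompactMultilinear E F,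
        ∀ A₂ ∈ SporadicallyMWeaklyCompactMultilinear E F,
        A₁ + A₂ ∈ SporadicallyMWeaklyCompactMultilinear E F) ∧
      (∀ (c : ℝ), ∀ A ∈ SporadicallyMWeaklyCompactMultilinear E F,
        c • A ∈ SporadicallyMWeaklyCompactMultilinear E F) := by
  set S := sporadicallyMWeaklyCompactSubmodule E F
  rw [← coe_sporadicallyMWeaklyCompactSubmodule]
  exact ⟨isClosed_sporadicallyMWeaklyCompactSubmodule E F, S.zero_mem,
    fun _ h₁ _ h₂ ↦ S.add_mem h₁ h₂, fun c _ h ↦ S.smul_mem c h⟩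

/-- For Banach lattices `E₁, …, E_m` and a Banach space `F`, the set of sporadically
M-weakly compact `m`-linear operators is a closed linear subspace of `L(E₁,…,E_m;F)`. -/
theorem stmt9 {m : ℕ} (E : Fin m → Type*) (F : Type*)
    [∀ i, NormedAddCommGroup (E i)] [∀ i, Lattice (E i)]
    [∀ i, HasSolidNorm (E i)] [∀ i, IsOrderedAddMonoid (E i)] [∀ i, NormedSpace ℝ (E i)]
    [∀ i, CompleteSpace (E i)]
    [NormedAddCommGroup F] [NormedSpace ℝ F] [CompleteSpace F] :
    IsClosed (SporadicallyMWeaklyCompactMultilinear E F) ∧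
      (0 : ContinuousMultilinearMap ℝ E F) ∈ SporadicallyMWeaklyCompactMultilinear E F ∧
      (∀ A₁ ∈ SporadicallyMWeaklyCompactMultilinear E F,
        ∀ A₂ ∈ SporadicallyMWeaklyCompactMultilinear E F,
        A₁ + A₂ ∈ SporadicallyMWeaklyCompactMultilinear E F) ∧
      (∀ (c : ℝ), ∀ A ∈ SporadicallyMWeaklyCompactMultilinear E F,
        c • A ∈ SporadicallyMWeaklyCompactMultilinear E F) :=
  stmt9_general E F
end

section
/- Let E_1, …, E_m be Banach lattices and let F be a Banach space. The set of strongly M-weakly compact m-linear operators, that is, continuous m-linear operators A : E_1 × ⋯ × E_m → F such that every resulting operator A_{a_{p_1},…,a_{p_k}} (obtained by fixing any 0 ≤ k ≤ m−1 coordinates p_1 < ⋯ < p_k at any vectors a_{p_j} ∈ E_{p_j}) sends norm bounded disjoint sequences in the product of the remaining Banach lattices (with the coordinatewise order) to norm null sequences in F, is a closed linear subspace of L(E_1,…,E_m;F). -/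
open Filter Topology Bornology

/-- Given vectors `a i` to be fixed at the coordinates in `S` and values `x` at the
remaining coordinates, builds the full vector in `E₁ × ⋯ × E_m`. -/
def fixCoords' {m : ℕ} {E : Fin m → Type*} (S : Finset (Fin m)) (a : ∀ i, E i)
    (x : ∀ i : {i : Fin m // i ∉ S}, E i.1) : ∀ i, E i :=
  fun i => if h : i ∈ S then a i else x ⟨i, h⟩

/-- The set of strongly M-weakly compact `m`-linear operators from Banach lattices
`E₁, …, E_m` to a Banach space `F`: every resulting operator, obtained by fixing any
`0 ≤ k ≤ m-1` coordinates at arbitrary vectors, sends norm bounded disjoint sequences of the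
product of the remaining Banach lattices (coordinatewise order) to norm null sequences. -/
def StronglyMWeaklyCompact {m : ℕ} (E : Fin m → Type*) (F : Type*)
    [∀ i, NormedAddCommGroup (E i)] [∀ i, Lattice (E i)]
    [∀ i, IsOrderedAddMonoid (E i)] [∀ i, HasSolidNorm (E i)] [∀ i, NormedSpace ℝ (E i)]
    [NormedAddCommGroup F] [NormedSpace ℝ F] : Set (ContinuousMultilinearMap ℝ E F) :=
  {A | ∀ S : Finset (Fin m), S ≠ Finset.univ → ∀ a : ∀ i, E i,
    ∀ x : ℕ → ∀ i : {i : Fin m // i ∉ S}, E i.1, IsBounded (Set.range x) →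
      (∀ j k, j ≠ k → |x j| ⊓ |x k| = 0) →
      Tendsto (fun n => ‖A (fixCoords' S a (x n))‖) atTop (nhds 0)}

/-! For a fixed sequence `v` of vectors, the operators `A` with `A (v n) → 0` form a linear
subspace, and when `v` is bounded, say by `C`, this subspace is closed: the evaluations
`A ↦ A (v n)` are linear maps of norm at most `C ^ m`, hence an equicontinuous family, and a
pointwise limit condition over an equicontinuous family is closed. The strongly M-weakly compact
operators are the intersection of these subspaces over the bounded sequences
`v n = fixCoords' S a (x n)`. -/

namespace ContinuousMultilinearMap

section TendstoZeroAlong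

variable {𝕜 ι : Type*} [NontriviallyNormedField 𝕜] {E : ι → Type*} {F : Type*}
  [∀ i, SeminormedAddCommGroup (E i)] [∀ i, NormedSpace 𝕜 (E i)]
  [SeminormedAddCommGroup F] [NormedSpace 𝕜 F]

variable (𝕜 E F) in
def tendstoZeroAlong (v : ℕ → ∀ i, E i) : Submodule 𝕜 (ContinuousMultilinearMap 𝕜 E F) where
  carrier := {A | Tendsto (fun n => A (v n)) atTop (𝓝 0)}
  zero_mem' := tendsto_const_nhds
  add_mem' h₁ h₂ := by simpa using h₁.add h₂
  smul_mem' c _ h := by simpa using h.const_smul c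

theorem isClosed_tendstoZeroAlong [Fintype ι] {v : ℕ → ∀ i, E i}
    (hv : IsBounded (Set.range v)) :
    IsClosed (tendstoZeroAlong 𝕜 E F v : Set (ContinuousMultilinearMap 𝕜 E F)) := by
  obtain ⟨C, hC⟩ := isBounded_iff_forall_norm_le.mp hv
  have hequi : Equicontinuous fun n (A : ContinuousMultilinearMap 𝕜 E F) => A (v n) := by
    have := (NormedSpace.equicontinuous_TFAE fun n => apply 𝕜 E F (v n)).out 3 1
    refine this.mp ⟨C ^ Fintype.card ι, fun n A => ?_⟩
    rw [apply_apply, mul_comm]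
    exact A.le_opNorm_mul_pow_card_of_le (hC _ (Set.mem_range_self n))
  exact hequi.isClosed_setOfPred_tendsto continuous_const

end TendstoZeroAlong

end ContinuousMultilinearMap

open ContinuousMultilinearMap

theorem norm_fixCoords'_le {m : ℕ} {E : Fin m → Type*} [∀ i, SeminormedAddCommGroup (E i)]
    (S : Finset (Fin m)) (a : ∀ i, E i) (y : ∀ i : {i : Fin m // i ∉ S}, E i.1) :
    ‖fixCoords' S a y‖ ≤ max ‖a‖ ‖y‖ := by
  refine (pi_norm_le_iff_of_nonneg (by positivity)).mpr fun i => ?_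
  by_cases h : i ∈ S
  · simpa [fixCoords', h] using le_max_of_le_left (norm_le_pi_norm a i)
  · simpa [fixCoords', h] using le_max_of_le_right (norm_le_pi_norm y ⟨i, h⟩)

theorem isBounded_range_fixCoords' {m : ℕ} {E : Fin m → Type*}
    [∀ i, SeminormedAddCommGroup (E i)] (S : Finset (Fin m)) (a : ∀ i, E i)
    {x : ℕ → ∀ i : {i : Fin m // i ∉ S}, E i.1} (hx : IsBounded (Set.range x)) :
    IsBounded (Set.range fun n => fixCoords' S a (x n)) := by
  obtain ⟨C, hC⟩ := isBounded_iff_forall_norm_le.mp hx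
  refine isBounded_iff_forall_norm_le.mpr ⟨max ‖a‖ C, ?_⟩
  rintro _ ⟨n, rfl⟩
  exact (norm_fixCoords'_le S a (x n)).trans (max_le_max_left _ (hC _ (Set.mem_range_self n)))

section StronglyMWeaklyCompact

variable {m : ℕ} (E : Fin m → Type*) (F : Type*)
  [∀ i, NormedAddCommGroup (E i)] [∀ i, Lattice (E i)]
  [∀ i, IsOrderedAddMonoid (E i)] [∀ i, HasSolidNorm (E i)] [∀ i, NormedSpace ℝ (E i)]
  [NormedAddCommGroup F] [NormedSpace ℝ F]

noncomputable def stronglyMWeaklyCompactSubmodule :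
    Submodule ℝ (ContinuousMultilinearMap ℝ E F) :=
  ⨅ (S : Finset (Fin m)) (_ : S ≠ Finset.univ) (a : ∀ i, E i)
    (x : ℕ → ∀ i : {i : Fin m // i ∉ S}, E i.1) (_ : IsBounded (Set.range x))
    (_ : ∀ j k, j ≠ k → |x j| ⊓ |x k| = 0),
    tendstoZeroAlong ℝ E F fun n => fixCoords' S a (x n)

theorem coe_stronglyMWeaklyCompactSubmodule :
    (stronglyMWeaklyCompactSubmodule E F : Set (ContinuousMultilinearMap ℝ E F)) =
      StronglyMWeaklyCompact E F := by
  ext A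
  simp [stronglyMWeaklyCompactSubmodule, tendstoZeroAlong,
    StronglyMWeaklyCompact, ← tendsto_zero_iff_norm_tendsto_zero]

theorem isClosed_stronglyMWeaklyCompact : IsClosed (StronglyMWeaklyCompact E F) := by
  rw [← coe_stronglyMWeaklyCompactSubmodule]
  simp only [stronglyMWeaklyCompactSubmodule, Submodule.coe_iInf]
  exact isClosed_iInter fun S => isClosed_iInter fun _ => isClosed_iInter fun a =>
    isClosed_iInter fun x => isClosed_iInter fun hx => isClosed_iInter fun _ =>
      isClosed_tendstoZeroAlong (isBounded_range_fixCoords' S a hx)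

end StronglyMWeaklyCompact

theorem stmt17_general {m : ℕ} (E : Fin m → Type*) (F : Type*)
    [∀ i, NormedAddCommGroup (E i)] [∀ i, Lattice (E i)]
    [∀ i, IsOrderedAddMonoid (E i)] [∀ i, HasSolidNorm (E i)] [∀ i, NormedSpace ℝ (E i)]
    [NormedAddCommGroup F] [NormedSpace ℝ F] :
    IsClosed (StronglyMWeaklyCompact E F) ∧
      (0 : ContinuousMultilinearMap ℝ E F) ∈ StronglyMWeaklyCompact E F ∧
      (∀ A₁ ∈ StronglyMWeaklyCompact E F, ∀ A₂ ∈ StronglyMWeaklyCompact E F,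
        A₁ + A₂ ∈ StronglyMWeaklyCompact E F) ∧
      (∀ (c : ℝ), ∀ A ∈ StronglyMWeaklyCompact E F,
        c • A ∈ StronglyMWeaklyCompact E F) := by
  refine ⟨isClosed_stronglyMWeaklyCompact E F, ?_⟩
  rw [← coe_stronglyMWeaklyCompactSubmodule]
  exact ⟨Submodule.zero_mem _, fun _ h₁ _ h₂ => Submodule.add_mem _ h₁ h₂,
    fun c _ h => Submodule.smul_mem _ c h⟩

/-- For Banach lattices `E₁, …, E_m` and a Banach space `F`, the set of strongly M-weakly
compact `m`-linear operators is a closed linear subspace of `L(E₁,…,E_m;F)`. -/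
theorem stmt17 {m : ℕ} (E : Fin m → Type*) (F : Type*)
    [∀ i, NormedAddCommGroup (E i)] [∀ i, Lattice (E i)]
    [∀ i, IsOrderedAddMonoid (E i)] [∀ i, HasSolidNorm (E i)] [∀ i, NormedSpace ℝ (E i)]
    [∀ i, CompleteSpace (E i)]
    [NormedAddCommGroup F] [NormedSpace ℝ F] [CompleteSpace F] :
    IsClosed (StronglyMWeaklyCompact E F) ∧
      (0 : ContinuousMultilinearMap ℝ E F) ∈ StronglyMWeaklyCompact E F ∧
      (∀ A₁ ∈ StronglyMWeaklyCompact E F, ∀ A₂ ∈ StronglyMWeaklyCompact E F,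
        A₁ + A₂ ∈ StronglyMWeaklyCompact E F) ∧
      (∀ (c : ℝ), ∀ A ∈ StronglyMWeaklyCompact E F,
        c • A ∈ StronglyMWeaklyCompact E F) :=
  stmt17_general E F
end

section
/- Let E_1, …, E_m, F be Banach spaces, let 𝒞_1, …, 𝒞_m be injective classes of linear operators on E_1, …, E_m respectively, and let 𝒩 be an m-semi-ideal. Then the set 𝒩∘(𝒞_1,…,𝒞_m)(E_1,…,E_m;F) of all continuous m-linear operators A : E_1 × ⋯ × E_m → F for which there exist Banach spaces G_1, …, G_m, linear operators S_i ∈ 𝒞_i(E_i, G_i) for i = 1,…,m, and an m-linear operator B ∈ 𝒩(G_1,…,G_m;F) such that A = B ∘ (S_1,…,S_m), is a closed linear subspace of L(E_1,…,E_m;F). -/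
open Filter Topology

universe u

/-- A bundled Banach space. -/
structure BanachSp' : Type (u + 1) where
  carrier : Type u
  [nacg : NormedAddCommGroup carrier]
  [nsp : NormedSpace ℝ carrier]
  [cs : CompleteSpace carrier]

attribute [instance] BanachSp'.nacg BanachSp'.nsp BanachSp'.cs

/-- An injective class of linear operators on a Banach space `E`: to each Banach space `G`
it assigns a closed linear subspace of `L(E,G)`, stable under composition with injective
operators on the left. -/
structure InjClass' (E : Type u) [NormedAddCommGroup E] [NormedSpace ℝ E] [CompleteSpace E] :
    Type (u + 1) where
  mem : ∀ G : BanachSp'.{u}, Set (E →L[ℝ] G.carrier)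
  isClosed : ∀ G, IsClosed (mem G)
  zero_mem : ∀ G, (0 : E →L[ℝ] G.carrier) ∈ mem G
  add_mem : ∀ G, ∀ f ∈ mem G, ∀ g ∈ mem G, f + g ∈ mem G
  smul_mem : ∀ (G) (c : ℝ), ∀ f ∈ mem G, c • f ∈ mem G
  comp_inj : ∀ (G H : BanachSp'.{u}), ∀ T ∈ mem G, ∀ I : G.carrier →L[ℝ] H.carrier,
    Function.Injective I → I.comp T ∈ mem H

/-- An `m`-semi-ideal: a class of continuous `m`-linear operators between Banach spaces whose
components are closed linear subspaces, stable under composition with surjective operators in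
each variable and an injective operator on the left. -/
structure MSemiIdeal' (m : ℕ) : Type (u + 1) where
  mem : ∀ (G : Fin m → BanachSp'.{u}) (G₀ : BanachSp'.{u}),
    Set (ContinuousMultilinearMap ℝ (fun i => (G i).carrier) G₀.carrier)
  isClosed : ∀ G G₀, IsClosed (mem G G₀)
  zero_mem : ∀ G G₀, 0 ∈ mem G G₀
  add_mem : ∀ G G₀, ∀ A ∈ mem G G₀, ∀ B ∈ mem G G₀, A + B ∈ mem G G₀
  smul_mem : ∀ (G G₀) (c : ℝ), ∀ A ∈ mem G G₀, c • A ∈ mem G G₀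
  comp_mem : ∀ (G : Fin m → BanachSp'.{u}) (G₀ : BanachSp'.{u}), ∀ A ∈ mem G G₀,
    ∀ (H : Fin m → BanachSp'.{u}) (H₀ : BanachSp'.{u})
      (uu : ∀ i, (H i).carrier →L[ℝ] (G i).carrier), (∀ i, Function.Surjective (uu i)) →
      ∀ t : G₀.carrier →L[ℝ] H₀.carrier, Function.Injective t →
        t.compContinuousMultilinearMap (A.compContinuousLinearMap uu) ∈ mem H H₀

/-- The set `N ∘ (C₁,…,C_m)(E₁,…,E_m;F)` of `m`-linear operators `A : E₁ × ⋯ × E_m → F`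
factoring as `A = B ∘ (S₁,…,S_m)` with `S_i` in the injective class `C i` and `B` in the
`m`-semi-ideal `N`. -/
def FactorableOperators' {m : ℕ} (E : Fin m → BanachSp'.{u}) (F : BanachSp'.{u})
    (C : ∀ i, InjClass'.{u} (E i).carrier) (N : MSemiIdeal'.{u} m) :
    Set (ContinuousMultilinearMap ℝ (fun i => (E i).carrier) F.carrier) :=
  {A | ∃ (G : Fin m → BanachSp'.{u})
      (S : ∀ i, (E i).carrier →L[ℝ] (G i).carrier)
      (B : ContinuousMultilinearMap ℝ (fun i => (G i).carrier) F.carrier),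
      (∀ i, S i ∈ (C i).mem (G i)) ∧ B ∈ N.mem G F ∧
      ∀ x : ∀ i, (E i).carrier, A x = B fun i => S i (x i)}

/-!
Sums factor through the products `G₁ i × G₂ i`, so the factorable operators form a subspace.
For closedness, write a limit `A` as a fast-converging series `∑ Qₙ` of factorable operators.

A factorization `Q = B ∘ (T₁, …, T_m)` can be improved to one with `‖Tᵢ‖ ≤ 1` and
`‖B‖ ≤ ‖Q‖ + ε`: replace `Gᵢ` by `Yᵢ = (Eᵢ × Gᵢ) ⧸ ker φᵢ`, where `φᵢ (x, h) = Tᵢ x + Λ⁻¹ h`.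
Then `g ↦ [(0, Λ g)]` is an injection `Gᵢ → Yᵢ` sending `Tᵢ x` to `[(x, 0)]`, `φᵢ` induces a
surjection `jᵢ : Yᵢ → Gᵢ`, and because `Yᵢ` carries the quotient norm,
`‖B ∘ j‖ ≤ ‖B ∘ φ‖ ≤ ‖B ∘ (T ∘ pr₁)‖ + O(Λ⁻¹) ≤ ‖Q‖ + O(Λ⁻¹)`.

Gluing the improved factorizations `Qₙ = Bₙ ∘ Sₙ` through the `ℓ∞`-sums of the spaces, with
`Vᵢ x = (2⁻ⁿ Sₙᵢ x)ₙ` and `𝔅 = ∑ₙ Bₙ ∘ (2ⁿ πₙ)`, gives `A = 𝔅 ∘ V`. The series for `Vᵢ`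
converges in norm, and so does the one for `𝔅` once `‖Qₙ‖ ≤ 2^(-(m+1)n)`; as the classes are
closed, `Vᵢ ∈ 𝒞ᵢ` and `𝔅 ∈ 𝒩`.
-/

open scoped ENNReal

theorem ContinuousMultilinearMap.opNorm_le_opNorm_compContinuousLinearMap_of_lift
    {𝕜 ι : Type*} [NontriviallyNormedField 𝕜] [Fintype ι] {W Y : ι → Type*} {F : Type*}
    [∀ i, SeminormedAddCommGroup (W i)] [∀ i, NormedSpace 𝕜 (W i)]
    [∀ i, SeminormedAddCommGroup (Y i)] [∀ i, NormedSpace 𝕜 (Y i)]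
    [SeminormedAddCommGroup F] [NormedSpace 𝕜 F]
    (f : ContinuousMultilinearMap 𝕜 Y F) (q : ∀ i, W i →L[𝕜] Y i)
    (hq : ∀ i (y : Y i) (δ : ℝ), 0 < δ → ∃ w, q i w = y ∧ ‖w‖ < ‖y‖ + δ) :
    ‖f‖ ≤ ‖f.compContinuousLinearMap q‖ := by
  refine f.opNorm_le_bound (norm_nonneg _) fun y => ?_
  have hδ : ∀ δ > 0, ‖f y‖ ≤ ‖f.compContinuousLinearMap q‖ * ∏ i, (‖y i‖ + δ) := by
    intro δ hδ
    choose w hw hwy using fun i => hq i (y i) δ hδ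
    calc ‖f y‖ = ‖f.compContinuousLinearMap q w‖ := by simp [hw]
      _ ≤ ‖f.compContinuousLinearMap q‖ * ∏ i, ‖w i‖ := le_opNorm _ _
      _ ≤ _ := by gcongr with i; exact (hwy i).le
  have hlim : Tendsto (fun δ => ‖f.compContinuousLinearMap q‖ * ∏ i, (‖y i‖ + δ)) (𝓝[>] 0)
      (𝓝 (‖f.compContinuousLinearMap q‖ * ∏ i, ‖y i‖)) := by
    refine tendsto_nhdsWithin_of_tendsto_nhds (Continuous.tendsto' ?_ 0 _ (by simp))
    fun_prop
  exact ge_of_tendsto hlim (eventually_nhdsWithin_of_forall hδ)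

theorem ContinuousMultilinearMap.norm_compContinuousLinearMap_le_of_norm_le
    {𝕜 ι : Type*} [NontriviallyNormedField 𝕜] [Fintype ι] {E E₁ : ι → Type*} {F : Type*}
    [∀ i, SeminormedAddCommGroup (E i)] [∀ i, NormedSpace 𝕜 (E i)]
    [∀ i, SeminormedAddCommGroup (E₁ i)] [∀ i, NormedSpace 𝕜 (E₁ i)]
    [SeminormedAddCommGroup F] [NormedSpace 𝕜 F]
    (B : ContinuousMultilinearMap 𝕜 E₁ F) (f : ∀ i, E i →L[𝕜] E₁ i) {c : ℝ}
    (hf : ∀ i, ‖f i‖ ≤ c) :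
    ‖B.compContinuousLinearMap f‖ ≤ ‖B‖ * c ^ Fintype.card ι :=
  calc _ ≤ ‖B‖ * ∏ i, ‖f i‖ := norm_compContinuousLinearMap_le _ _
    _ ≤ ‖B‖ * ∏ _i : ι, c := by gcongr with i; exact hf i
    _ = _ := by rw [Finset.prod_const, Finset.card_univ]

theorem ContinuousMultilinearMap.norm_compContinuousLinearMap_sub_le
    {𝕜 ι : Type*} [NontriviallyNormedField 𝕜] [Fintype ι] {E E₁ : ι → Type*} {F : Type*}
    [∀ i, SeminormedAddCommGroup (E i)] [∀ i, NormedSpace 𝕜 (E i)]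
    [∀ i, SeminormedAddCommGroup (E₁ i)] [∀ i, NormedSpace 𝕜 (E₁ i)]
    [SeminormedAddCommGroup F] [NormedSpace 𝕜 F]
    (B : ContinuousMultilinearMap 𝕜 E₁ F) (φ φ₀ : ∀ i, E i →L[𝕜] E₁ i) :
    ‖B.compContinuousLinearMap φ - B.compContinuousLinearMap φ₀‖ ≤
      ‖B‖ * Fintype.card ι * max ‖φ‖ ‖φ₀‖ ^ (Fintype.card ι - 1) * ‖φ - φ₀‖ := by
  set Ψ := compContinuousLinearMapContinuousMultilinear 𝕜 E E₁ F
  have hΨ : ‖Ψ‖ ≤ 1 := MultilinearMap.mkContinuous_norm_le _ zero_le_one _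
  calc _ = ‖(Ψ φ - Ψ φ₀) B‖ := by simp [Ψ]
    _ ≤ ‖Ψ φ - Ψ φ₀‖ * ‖B‖ := (Ψ φ - Ψ φ₀).le_opNorm B
    _ ≤ (‖Ψ‖ * Fintype.card ι * max ‖φ‖ ‖φ₀‖ ^ (Fintype.card ι - 1) * ‖φ - φ₀‖) * ‖B‖ := by
      gcongr
      exact Ψ.norm_image_sub_le φ φ₀
    _ ≤ (1 * Fintype.card ι * max ‖φ‖ ‖φ₀‖ ^ (Fintype.card ι - 1) * ‖φ - φ₀‖) * ‖B‖ := by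
      gcongr
    _ = _ := by ring

namespace lp

variable {𝕜 α : Type*} [NontriviallyNormedField 𝕜] {Y : α → Type*}
  [∀ n, NormedAddCommGroup (Y n)] [∀ n, NormedSpace 𝕜 (Y n)] {p : ℝ≥0∞} [Fact (1 ≤ p)]

variable (𝕜 Y p) in
theorem norm_evalCLM_le (n : α) : ‖evalCLM 𝕜 Y p n‖ ≤ 1 :=
  LinearMap.mkContinuous_norm_le _ zero_le_one _

variable [DecidableEq α]

variable (𝕜 Y p) in
theorem norm_singleContinuousLinearMap_le (n : α) : ‖singleContinuousLinearMap 𝕜 Y p n‖ ≤ 1 :=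
  ContinuousLinearMap.opNorm_le_bound _ zero_le_one fun y => by
    rw [one_mul, singleContinuousLinearMap_apply,
      lp.norm_single (zero_lt_one.trans_le Fact.out)]

theorem evalCLM_singleContinuousLinearMap (n : α) (y : Y n) :
    evalCLM 𝕜 Y p n (singleContinuousLinearMap 𝕜 Y p n y) = y := by
  simp [evalCLM]

theorem evalCLM_tsum_singleContinuousLinearMap_comp_apply {X : Type*} [NormedAddCommGroup X]
    [NormedSpace 𝕜 X] {s : ∀ n, X →L[𝕜] Y n}
    (hs : Summable fun n => (singleContinuousLinearMap 𝕜 Y p n).comp (s n)) (k : α) (x : X) :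
    evalCLM 𝕜 Y p k ((∑' n, (singleContinuousLinearMap 𝕜 Y p n).comp (s n)) x) = s k x := by
  refine (hs.hasSum.mapL ((evalCLM 𝕜 Y p k).comp (.apply 𝕜 _ x))).unique ?_
  convert hasSum_single k fun n hn => ?_
  · simp [evalCLM]
  · simp [evalCLM, Pi.single_eq_of_ne hn.symm]

theorem summable_singleContinuousLinearMap_comp [∀ n, CompleteSpace (Y n)] {X : Type*}
    [NormedAddCommGroup X] [NormedSpace 𝕜 X] {s : ∀ n, X →L[𝕜] Y n} {c : α → ℝ}
    (hc : Summable c) (hs : ∀ n, ‖s n‖ ≤ c n) :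
    Summable fun n => (singleContinuousLinearMap 𝕜 Y p n).comp (s n) :=
  .of_norm_bounded hc fun n => ((singleContinuousLinearMap 𝕜 Y p n).opNorm_comp_le _).trans
    (mul_le_of_le_one_left (norm_nonneg _) (norm_singleContinuousLinearMap_le 𝕜 Y p n)
      |>.trans (hs n))

end lp

theorem AddSubgroup.exists_hasSum_of_mem_topologicalClosure {X : Type*} [NormedAddCommGroup X]
    [CompleteSpace X] {M : AddSubgroup X} {A : X} (hA : A ∈ M.topologicalClosure) {r : ℝ}
    (hr₀ : 0 < r) (hr₁ : r < 1) :
    ∃ Q : ℕ → X, (∀ n, Q n ∈ M) ∧ (∀ᶠ n in atTop, ‖Q n‖ ≤ r ^ n) ∧ HasSum Q A := by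
  choose R hRM hR using fun n : ℕ => Metric.mem_closure_iff.mp hA (r ^ n / 2) (by positivity)
  -- Prepending `0` to the approximants makes the partial sums of the differences equal to them.
  let P : ℕ → X := fun n => if n = 0 then 0 else R n
  have hPM (n : ℕ) : P n ∈ M := by
    by_cases hn : n = 0
    · simp [P, hn, M.zero_mem]
    · simpa [P, hn] using hRM n
  have hQr : ∀ᶠ n in atTop, ‖P (n + 1) - P n‖ ≤ r ^ n := by
    filter_upwards [eventually_ne_atTop 0] with n hn
    have hr : r ^ (n + 1) ≤ r ^ n := pow_le_pow_of_le_one hr₀.le hr₁.le n.le_succ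
    calc ‖P (n + 1) - P n‖ = dist (R (n + 1)) (R n) := by simp [P, hn, dist_eq_norm]
      _ ≤ dist A (R (n + 1)) + dist A (R n) := dist_triangle_left _ _ _
      _ ≤ r ^ n := by linarith [hR n, hR (n + 1)]
  have hPA : Tendsto P atTop (𝓝 A) := by
    refine ((tendsto_iff_dist_tendsto_zero (f := R)).mpr ?_).congr' ?_
    · refine squeeze_zero (fun _ => dist_nonneg) (fun n => (dist_comm _ _).trans_le (hR n).le) ?_
      simpa using (tendsto_pow_atTop_nhds_zero_of_lt_one hr₀.le hr₁).div_const (2 : ℝ)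
    · filter_upwards [eventually_ne_atTop 0] with n hn
      simp [P, hn]
  refine ⟨fun n => P (n + 1) - P n, fun n => M.sub_mem (hPM _) (hPM _), hQr, ?_⟩
  rw [(Summable.of_norm_bounded_eventually_nat
    (summable_geometric_of_lt_one hr₀.le hr₁) hQr).hasSum_iff_tendsto_nat]
  simp only [Finset.sum_range_sub (f := P)]
  simpa [P] using hPA

noncomputable def BanachSp'.prod (G₁ G₂ : BanachSp'.{u}) : BanachSp'.{u} :=
  ⟨G₁.carrier × G₂.carrier⟩

namespace InjClass'

variable {E : Type u} [NormedAddCommGroup E] [NormedSpace ℝ E] [CompleteSpace E]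
  (C : InjClass'.{u} E)

def toSubmodule (G : BanachSp'.{u}) : Submodule ℝ (E →L[ℝ] G.carrier) where
  carrier := C.mem G
  add_mem' ha hb := C.add_mem G _ ha _ hb
  zero_mem' := C.zero_mem G
  smul_mem' := C.smul_mem G

theorem tsum_mem {G : BanachSp'.{u}} {ι : Type*} {f : ι → E →L[ℝ] G.carrier}
    (hf : ∀ i, f i ∈ C.mem G) : ∑' i, f i ∈ C.mem G :=
  _root_.tsum_mem (s := C.toSubmodule G) (C.isClosed G) hf

theorem prod_mem {G₁ G₂ : BanachSp'.{u}} {S₁ : E →L[ℝ] G₁.carrier} {S₂ : E →L[ℝ] G₂.carrier}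
    (h₁ : S₁ ∈ C.mem G₁) (h₂ : S₂ ∈ C.mem G₂) : S₁.prod S₂ ∈ C.mem (G₁.prod G₂) := by
  have hsum : (ContinuousLinearMap.inl ℝ G₁.carrier G₂.carrier).comp S₁ +
      (ContinuousLinearMap.inr ℝ G₁.carrier G₂.carrier).comp S₂ = S₁.prod S₂ := by
    ext x <;> simp
  exact hsum ▸ C.add_mem (G₁.prod G₂) _
    (C.comp_inj G₁ (G₁.prod G₂) S₁ h₁ _ fun _ _ h => congrArg Prod.fst h)
    _ (C.comp_inj G₂ (G₁.prod G₂) S₂ h₂ _ fun _ _ h => congrArg Prod.snd h)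

end InjClass'

namespace MSemiIdeal'

variable {m : ℕ} (N : MSemiIdeal'.{u} m)

def toSubmodule (G : Fin m → BanachSp'.{u}) (G₀ : BanachSp'.{u}) :
    Submodule ℝ (ContinuousMultilinearMap ℝ (fun i => (G i).carrier) G₀.carrier) where
  carrier := N.mem G G₀
  add_mem' ha hb := N.add_mem G G₀ _ ha _ hb
  zero_mem' := N.zero_mem G G₀
  smul_mem' := N.smul_mem G G₀

theorem tsum_mem {G : Fin m → BanachSp'.{u}} {G₀ : BanachSp'.{u}} {ι : Type*}
    {f : ι → ContinuousMultilinearMap ℝ (fun i => (G i).carrier) G₀.carrier}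
    (hf : ∀ i, f i ∈ N.mem G G₀) : ∑' i, f i ∈ N.mem G G₀ :=
  _root_.tsum_mem (s := N.toSubmodule G G₀) (N.isClosed G G₀) hf

theorem compContinuousLinearMap_mem {G H : Fin m → BanachSp'.{u}} {G₀ : BanachSp'.{u}}
    {B : ContinuousMultilinearMap ℝ (fun i => (G i).carrier) G₀.carrier} (hB : B ∈ N.mem G G₀)
    (q : ∀ i, (H i).carrier →L[ℝ] (G i).carrier) (hq : ∀ i, Function.Surjective (q i)) :
    B.compContinuousLinearMap q ∈ N.mem H G₀ :=
  N.comp_mem G G₀ B hB H G₀ q hq (.id ℝ G₀.carrier) Function.injective_id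

end MSemiIdeal'

section Factorable

variable {m : ℕ} (E : Fin m → BanachSp'.{u}) (F : BanachSp'.{u})
  (C : ∀ i, InjClass'.{u} (E i).carrier) (N : MSemiIdeal'.{u} m)

theorem zero_mem_factorableOperators :
    (0 : ContinuousMultilinearMap ℝ (fun i => (E i).carrier) F.carrier) ∈
      FactorableOperators' E F C N :=
  ⟨E, 0, 0, fun i => (C i).zero_mem _, N.zero_mem _ _, fun _ => rfl⟩

variable {E F C N}

theorem add_mem_factorableOperators
    {A₁ A₂ : ContinuousMultilinearMap ℝ (fun i => (E i).carrier) F.carrier}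
    (h₁ : A₁ ∈ FactorableOperators' E F C N) (h₂ : A₂ ∈ FactorableOperators' E F C N) :
    A₁ + A₂ ∈ FactorableOperators' E F C N := by
  obtain ⟨G₁, S₁, B₁, hS₁, hB₁, hA₁⟩ := h₁
  obtain ⟨G₂, S₂, B₂, hS₂, hB₂, hA₂⟩ := h₂
  refine ⟨fun i => (G₁ i).prod (G₂ i), fun i => (S₁ i).prod (S₂ i),
    B₁.compContinuousLinearMap (fun i => .fst ℝ _ _) +
      B₂.compContinuousLinearMap (fun i => .snd ℝ _ _),
    fun i => (C i).prod_mem (hS₁ i) (hS₂ i),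
    N.add_mem _ _ _ (N.compContinuousLinearMap_mem hB₁ _ fun _ => Prod.fst_surjective)
      _ (N.compContinuousLinearMap_mem hB₂ _ fun _ => Prod.snd_surjective), fun x => ?_⟩
  rw [add_apply, hA₁ x, hA₂ x]
  rfl

theorem smul_mem_factorableOperators (c : ℝ)
    {A : ContinuousMultilinearMap ℝ (fun i => (E i).carrier) F.carrier}
    (hA : A ∈ FactorableOperators' E F C N) : c • A ∈ FactorableOperators' E F C N := by
  obtain ⟨G, S, B, hS, hB, hA⟩ := hA
  exact ⟨G, S, c • B, hS, N.smul_mem _ _ c _ hB, fun x => by simp [hA x]⟩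

variable (E F C N)

def factorableSubmodule :
    Submodule ℝ (ContinuousMultilinearMap ℝ (fun i => (E i).carrier) F.carrier) where
  carrier := FactorableOperators' E F C N
  add_mem' := add_mem_factorableOperators
  zero_mem' := zero_mem_factorableOperators E F C N
  smul_mem' := smul_mem_factorableOperators

end Factorable

section Taming

variable {X G : Type u} [NormedAddCommGroup X] [NormedSpace ℝ X]
  [NormedAddCommGroup G] [NormedSpace ℝ G]

noncomputable def tamingMap (T : X →L[ℝ] G) (Λ : ℝ) : X × G →L[ℝ] G :=
  T.comp (.fst ℝ X G) + Λ⁻¹ • .snd ℝ X G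

@[simp]
theorem tamingMap_apply (T : X →L[ℝ] G) (Λ : ℝ) (w : X × G) :
    tamingMap T Λ w = T w.1 + Λ⁻¹ • w.2 := rfl

instance (T : X →L[ℝ] G) (Λ : ℝ) : IsClosed ((tamingMap T Λ).ker : Set (X × G)) :=
  (tamingMap T Λ).isClosed_ker

abbrev TamedSpace (T : X →L[ℝ] G) (Λ : ℝ) : Type u :=
  (X × G) ⧸ (tamingMap T Λ).ker

noncomputable def tamedProj (T : X →L[ℝ] G) (Λ : ℝ) : TamedSpace T Λ →L[ℝ] G :=
  (tamingMap T Λ).ker.liftQL (tamingMap T Λ) le_rfl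

noncomputable def tamedIncl (T : X →L[ℝ] G) (Λ : ℝ) : G →L[ℝ] TamedSpace T Λ :=
  (tamingMap T Λ).ker.mkQL.comp (Λ • .inr ℝ X G)

variable {Λ : ℝ}

theorem leftInverse_tamedProj_tamedIncl (T : X →L[ℝ] G) (hΛ : Λ ≠ 0) :
    Function.LeftInverse (tamedProj T Λ) (tamedIncl T Λ) := by
  intro g
  simp [tamedIncl, tamedProj, hΛ]

theorem tamedIncl_comp_apply (T : X →L[ℝ] G) (hΛ : Λ ≠ 0) (x : X) :
    (tamedIncl T Λ).comp T x = (tamingMap T Λ).ker.mkQL (x, 0) := by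
  simp only [tamedIncl, ContinuousLinearMap.comp_apply, Submodule.mkQL_apply, Submodule.mkQ_apply,
    Submodule.Quotient.eq, LinearMap.mem_ker]
  simp [hΛ]

theorem norm_tamedIncl_comp_le (T : X →L[ℝ] G) (hΛ : Λ ≠ 0) :
    ‖(tamedIncl T Λ).comp T‖ ≤ 1 := by
  refine ContinuousLinearMap.opNorm_le_bound _ zero_le_one fun x => ?_
  rw [tamedIncl_comp_apply T hΛ, one_mul]
  calc _ ≤ ‖((x, 0) : X × G)‖ := Submodule.Quotient.norm_mk_le _ _
    _ = ‖x‖ := by simp [Prod.norm_def]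

end Taming

section TamingEstimate

variable {ι : Type*} [Fintype ι] {X G : ι → Type u} {Λ : ℝ}
  [∀ i, NormedAddCommGroup (X i)] [∀ i, NormedSpace ℝ (X i)]
  [∀ i, NormedAddCommGroup (G i)] [∀ i, NormedSpace ℝ (G i)]
  {F : Type*} [NormedAddCommGroup F] [NormedSpace ℝ F]

theorem norm_compContinuousLinearMap_tamedProj_le (T : ∀ i, X i →L[ℝ] G i) (hΛ : 1 ≤ Λ)
    (B : ContinuousMultilinearMap ℝ G F) :
    ‖B.compContinuousLinearMap fun i => tamedProj (T i) Λ‖ ≤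
      ‖B.compContinuousLinearMap T‖ +
        ‖B‖ * Fintype.card ι * (‖T‖ + 1) ^ (Fintype.card ι - 1) * Λ⁻¹ := by
  set φ : ∀ i, X i × G i →L[ℝ] G i := fun i => tamingMap (T i) Λ
  set φ₀ : ∀ i, X i × G i →L[ℝ] G i := fun i => (T i).comp (.fst ℝ (X i) (G i))
  have hφ₀ : ‖φ₀‖ ≤ ‖T‖ := by
    refine pi_norm_le_iff_of_nonneg (norm_nonneg _) |>.mpr fun i => ?_
    calc ‖φ₀ i‖ ≤ ‖T i‖ * ‖ContinuousLinearMap.fst ℝ (X i) (G i)‖ := (T i).opNorm_comp_le _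
      _ ≤ ‖T i‖ := mul_le_of_le_one_right (norm_nonneg _) (ContinuousLinearMap.norm_fst_le _ _ _)
      _ ≤ ‖T‖ := norm_le_pi_norm T i
  have hφφ₀ : ‖φ - φ₀‖ ≤ Λ⁻¹ := by
    refine pi_norm_le_iff_of_nonneg (by positivity) |>.mpr fun i => ?_
    have : (φ - φ₀) i = Λ⁻¹ • ContinuousLinearMap.snd ℝ (X i) (G i) := by
      simp [φ, φ₀, tamingMap]
    rw [this]
    calc _ ≤ ‖Λ⁻¹‖ * ‖ContinuousLinearMap.snd ℝ (X i) (G i)‖ := norm_smul_le _ _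
      _ ≤ ‖Λ⁻¹‖ := mul_le_of_le_one_right (norm_nonneg _) (ContinuousLinearMap.norm_snd_le _ _ _)
      _ = Λ⁻¹ := Real.norm_of_nonneg (by positivity)
  have hmax : max ‖φ‖ ‖φ₀‖ ≤ ‖T‖ + 1 := by
    have hΛ₁ : Λ⁻¹ ≤ 1 := inv_le_one_of_one_le₀ hΛ
    refine max_le ?_ (by linarith)
    calc ‖φ‖ ≤ ‖φ₀‖ + ‖φ - φ₀‖ := norm_le_insert' _ _
      _ ≤ ‖T‖ + 1 := by linarith
  have hmain : ‖B.compContinuousLinearMap φ₀‖ ≤ ‖B.compContinuousLinearMap T‖ :=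
    calc ‖(B.compContinuousLinearMap T).compContinuousLinearMap fun i => .fst ℝ (X i) (G i)‖
        ≤ ‖B.compContinuousLinearMap T‖ * ∏ i, ‖ContinuousLinearMap.fst ℝ (X i) (G i)‖ :=
          ContinuousMultilinearMap.norm_compContinuousLinearMap_le _ _
      _ ≤ ‖B.compContinuousLinearMap T‖ := mul_le_of_le_one_right (norm_nonneg _)
          (Finset.prod_le_one (fun _ _ => norm_nonneg _)
            fun i _ => ContinuousLinearMap.norm_fst_le _ _ _)
  have hdiff : ‖B.compContinuousLinearMap φ - B.compContinuousLinearMap φ₀‖ ≤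
      ‖B‖ * Fintype.card ι * (‖T‖ + 1) ^ (Fintype.card ι - 1) * Λ⁻¹ :=
    (B.norm_compContinuousLinearMap_sub_le φ φ₀).trans (by gcongr)
  calc ‖B.compContinuousLinearMap fun i => tamedProj (T i) Λ‖
      ≤ ‖B.compContinuousLinearMap φ‖ :=
        (B.compContinuousLinearMap _).opNorm_le_opNorm_compContinuousLinearMap_of_lift
          (fun i => (tamingMap (T i) Λ).ker.mkQL) fun i y δ hδ => Submodule.Quotient.norm_mk_lt y hδ
    _ ≤ ‖B.compContinuousLinearMap φ₀‖ +
        ‖B.compContinuousLinearMap φ - B.compContinuousLinearMap φ₀‖ := norm_le_insert' _ _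
    _ ≤ _ := add_le_add hmain hdiff

end TamingEstimate

section Factorization

variable {m : ℕ} {E : Fin m → BanachSp'.{u}} {F : BanachSp'.{u}}
  {C : ∀ i, InjClass'.{u} (E i).carrier} {N : MSemiIdeal'.{u} m}

theorem exists_factorization_norm_le
    {A : ContinuousMultilinearMap ℝ (fun i => (E i).carrier) F.carrier}
    (hA : A ∈ FactorableOperators' E F C N) {ε : ℝ} (hε : 0 < ε) :
    ∃ (G : Fin m → BanachSp'.{u}) (S : ∀ i, (E i).carrier →L[ℝ] (G i).carrier)
      (B : ContinuousMultilinearMap ℝ (fun i => (G i).carrier) F.carrier),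
      (∀ i, S i ∈ (C i).mem (G i)) ∧ (∀ i, ‖S i‖ ≤ 1) ∧ B ∈ N.mem G F ∧ ‖B‖ ≤ ‖A‖ + ε ∧
      ∀ x : ∀ i, (E i).carrier, A x = B fun i => S i (x i) := by
  obtain ⟨G, T, B, hT, hB, hAB⟩ := hA
  set K := ‖B‖ * m * (‖T‖ + 1) ^ (m - 1)
  set Λ := K / ε + 1
  have hΛ : 1 ≤ Λ := le_add_of_nonneg_left (by positivity)
  have hΛ₀ : Λ ≠ 0 := (one_pos.trans_le hΛ).ne'
  have hKΛ : K * Λ⁻¹ ≤ ε := by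
    rw [← div_eq_mul_inv, div_le_iff₀ (one_pos.trans_le hΛ), mul_add, mul_div_cancel₀ _ hε.ne']
    linarith
  have hBT : B.compContinuousLinearMap T = A := by ext x; exact (hAB x).symm
  refine ⟨fun i => ⟨TamedSpace (T i) Λ⟩, fun i => (tamedIncl (T i) Λ).comp (T i),
    B.compContinuousLinearMap fun i => tamedProj (T i) Λ,
    fun i => (C i).comp_inj _ _ _ (hT i) _ (leftInverse_tamedProj_tamedIncl (T i) hΛ₀).injective,
    fun i => norm_tamedIncl_comp_le (T i) hΛ₀,
    N.compContinuousLinearMap_mem hB _ fun i =>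
      (leftInverse_tamedProj_tamedIncl (T i) hΛ₀).surjective, ?_, fun x => ?_⟩
  · calc _ ≤ ‖B.compContinuousLinearMap T‖ + K * Λ⁻¹ := by
          simpa using norm_compContinuousLinearMap_tamedProj_le T hΛ B
      _ ≤ ‖A‖ + ε := by rw [hBT]; gcongr
  · simp [hAB x, leftInverse_tamedProj_tamedIncl _ hΛ₀ _]

theorem mem_factorableOperators_of_hasSum {Y : ℕ → Fin m → BanachSp'.{u}}
    (S : ∀ n i, (E i).carrier →L[ℝ] (Y n i).carrier)
    (B : ∀ n, ContinuousMultilinearMap ℝ (fun i => (Y n i).carrier) F.carrier)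
    (hS : ∀ n i, S n i ∈ (C i).mem (Y n i)) (hS₁ : ∀ n i, ‖S n i‖ ≤ 1)
    (hB : ∀ n, B n ∈ N.mem (Y n) F) (hB_sum : Summable fun n => (2 : ℝ) ^ (n * m) * ‖B n‖)
    {A : ContinuousMultilinearMap ℝ (fun i => (E i).carrier) F.carrier}
    (hA : HasSum (fun n => (B n).compContinuousLinearMap (S n)) A) :
    A ∈ FactorableOperators' E F C N := by
  let H : Fin m → BanachSp'.{u} := fun i => ⟨lp (fun n => (Y n i).carrier) ∞⟩
  let incl (n : ℕ) (i : Fin m) : (Y n i).carrier →L[ℝ] (H i).carrier :=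
    lp.singleContinuousLinearMap ℝ (fun n => (Y n i).carrier) ∞ n
  let proj (n : ℕ) (i : Fin m) : (H i).carrier →L[ℝ] (Y n i).carrier :=
    lp.evalCLM ℝ (fun n => (Y n i).carrier) ∞ n
  let v (i : Fin m) (n : ℕ) : (E i).carrier →L[ℝ] (H i).carrier :=
    (incl n i).comp ((2⁻¹ : ℝ) ^ n • S n i)
  let θ (n : ℕ) : ContinuousMultilinearMap ℝ (fun i => (H i).carrier) F.carrier :=
    (B n).compContinuousLinearMap fun i => (2 : ℝ) ^ n • proj n i
  have hv (i : Fin m) : Summable (v i) :=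
    lp.summable_singleContinuousLinearMap_comp
      (summable_geometric_of_lt_one (r := (2⁻¹ : ℝ)) (by norm_num) (by norm_num)) fun n => by
        rw [norm_smul, Real.norm_of_nonneg (by positivity)]
        exact mul_le_of_le_one_right (by positivity) (hS₁ n i)
  have hθ : Summable θ := by
    refine .of_norm_bounded hB_sum fun n => ?_
    have hproj (i : Fin m) : ‖(2 : ℝ) ^ n • proj n i‖ ≤ 2 ^ n := by
      rw [norm_smul, Real.norm_of_nonneg (by positivity)]
      exact mul_le_of_le_one_right (by positivity)
        (lp.norm_evalCLM_le ℝ (fun n => (Y n i).carrier) ∞ n)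
    calc ‖θ n‖ ≤ ‖B n‖ * ((2 : ℝ) ^ n) ^ Fintype.card (Fin m) :=
          (B n).norm_compContinuousLinearMap_le_of_norm_le _ hproj
      _ = _ := by rw [Fintype.card_fin, ← pow_mul, mul_comm]
  refine ⟨H, fun i => ∑' n, v i n, ∑' n, θ n,
    fun i => (C i).tsum_mem fun n => (C i).comp_inj _ _ _ ((C i).smul_mem _ _ _ (hS n i)) _
      (lp.isometry_single (E := fun n => (Y n i).carrier) n).injective,
    N.tsum_mem fun n => N.compContinuousLinearMap_mem (hB n) _ fun i y =>
      ⟨incl n i ((2⁻¹ : ℝ) ^ n • y), by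
        rw [smul_apply, lp.evalCLM_singleContinuousLinearMap, inv_pow,
          smul_inv_smul₀ (pow_ne_zero n two_ne_zero)]⟩,
    fun x => ?_⟩
  have hcoord (i : Fin m) (n : ℕ) :
      proj n i ((∑' k, v i k) (x i)) = (2⁻¹ : ℝ) ^ n • S n i (x i) :=
    lp.evalCLM_tsum_singleContinuousLinearMap_comp_apply (hv i) n (x i)
  refine (hA.mapL (ContinuousMultilinearMap.apply ℝ _ _ x)).unique ?_
  convert hθ.hasSum.mapL (ContinuousMultilinearMap.apply ℝ _ _ fun i => (∑' k, v i k) (x i))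
    using 1
  · funext n
    simp [θ, hcoord, smul_smul]
  · rfl

end Factorization

section Closed

variable {m : ℕ} (E : Fin m → BanachSp'.{u}) (F : BanachSp'.{u})
  (C : ∀ i, InjClass'.{u} (E i).carrier) (N : MSemiIdeal'.{u} m)

theorem isClosed_factorableOperators : IsClosed (FactorableOperators' E F C N) := by
  refine isClosed_of_closure_subset fun A hA => ?_
  -- Chosen so that `2 ^ (n * m) * r ^ n = 2⁻¹ ^ n` is summable.
  set r : ℝ := 2⁻¹ ^ (m + 1)
  have hr₀ : 0 < r := by positivity
  have hr₁ : r < 1 := pow_lt_one₀ (by norm_num) (by norm_num) (Nat.succ_ne_zero m)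
  obtain ⟨Q, hQ, hQr, hQA⟩ := AddSubgroup.exists_hasSum_of_mem_topologicalClosure
    (M := (factorableSubmodule E F C N).toAddSubgroup) hA hr₀ hr₁
  choose Y S B hS hS₁ hB hBQ hQSB using
    fun n => exists_factorization_norm_le (hQ n) (pow_pos hr₀ n)
  refine mem_factorableOperators_of_hasSum S B hS hS₁ hB ?_ ?_
  · refine .of_norm_bounded_eventually_nat
      ((summable_geometric_of_lt_one (r := (2⁻¹ : ℝ)) (by norm_num) (by norm_num)).mul_left 2) ?_
    filter_upwards [hQr] with n hn
    have hpow : (2 : ℝ) ^ (n * m) * r ^ n = 2⁻¹ ^ n := by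
      rw [← pow_mul, show (m + 1) * n = n * m + n by ring, pow_add, ← mul_assoc, ← mul_pow,
        mul_inv_cancel₀ two_ne_zero, one_pow, one_mul]
    calc ‖(2 : ℝ) ^ (n * m) * ‖B n‖‖ = 2 ^ (n * m) * ‖B n‖ := by simp
      _ ≤ 2 ^ (n * m) * (2 * r ^ n) := by gcongr; linarith [hBQ n]
      _ = 2 * 2⁻¹ ^ n := by rw [← hpow]; ring
  · have hQ_eq : (fun n => (B n).compContinuousLinearMap (S n)) = Q :=
      funext fun n => ContinuousMultilinearMap.ext fun x => (hQSB n x).symm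
    exact hQ_eq ▸ hQA

end Closed

/-- `N ∘ (C₁,…,C_m)(E₁,…,E_m;F)` is a closed linear subspace of `L(E₁,…,E_m;F)`. -/
theorem stmt19 {m : ℕ} (E : Fin m → BanachSp'.{u}) (F : BanachSp'.{u})
    (C : ∀ i, InjClass'.{u} (E i).carrier) (N : MSemiIdeal'.{u} m) :
    IsClosed (FactorableOperators' E F C N) ∧
      (0 : ContinuousMultilinearMap ℝ (fun i => (E i).carrier) F.carrier) ∈
        FactorableOperators' E F C N ∧
      (∀ A₁ ∈ FactorableOperators' E F C N, ∀ A₂ ∈ FactorableOperators' E F C N,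
        A₁ + A₂ ∈ FactorableOperators' E F C N) ∧
      (∀ (c : ℝ), ∀ A ∈ FactorableOperators' E F C N,
        c • A ∈ FactorableOperators' E F C N) := by
  exact ⟨isClosed_factorableOperators E F C N, (factorableSubmodule E F C N).zero_mem,
    fun _ h₁ _ h₂ => (factorableSubmodule E F C N).add_mem h₁ h₂,
    fun c _ h => (factorableSubmodule E F C N).smul_mem c h⟩
end
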